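/- Under the weak learnability (margin) assumption, the L¹ norm of the functional gradient of the cross-entropy loss is bounded by an inner product with some base learner: there exists ψ* ∈ Ψ with ⟨∇, -ψ*⟩_{L²(S_n)} ≥ γB·‖∇‖_{L¹(S_n)}, where ∇_i = σ(g(X_i)) - Y_i. -/
import Mathlib


noncomputable def sigmoid (t : ℝ) : ℝ := (1 + Real.exp (-t))⁻¹

lemma sigmoid_pos (t : ℝ) : 0 < sigmoid t := by
  unfold sigmoid
  positivity

lemma sigmoid_lt_one (t : ℝ) : sigmoid t < 1 := by
  unfold sigmoid
  rw [inv_lt_one_iff₀]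
  right
  linarith [Real.exp_pos (-t)]

/-- Under the weak learnability (margin) assumption, the `L¹` norm of the functional
gradient of the cross-entropy loss is bounded by an empirical inner product with some
base learner: there exists `ψ* ∈ Ψ` with `⟨∇, -ψ*⟩_{L²(Sₙ)} ≥ γB‖∇‖_{L¹(Sₙ)}`. -/
theorem margin_implies_grad_inner_bound {X : Type*} (n : ℕ) (hn : 0 < n)
    (x : Fin n → X) (y : Fin n → ℝ) (hy : ∀ i, y i = 0 ∨ y i = 1) (g : X → ℝ)
    (Ψ : Set (X → ℝ)) (hneg : ∀ ψ ∈ Ψ, (fun a => -ψ a) ∈ Ψ)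
    (B : ℝ) (hB : 1 ≤ B) (hbdd : ∀ ψ ∈ Ψ, ∀ a, |ψ a| ≤ B)
    (γ : ℝ) (hγ : 0 < γ)
    (hmargin : ∀ q : Fin n → ℝ, (∀ i, 0 ≤ q i) → (∑ i, q i) = 1 →
      ∃ ψ ∈ Ψ, γ * B ≤ ∑ i, q i * (2 * y i - 1) * ψ (x i)) :
    ∃ ψ ∈ Ψ, γ * B * ((1 / n) * ∑ i, |sigmoid (g (x i)) - y i|) ≤
      (1 / n) * ∑ i, (sigmoid (g (x i)) - y i) * (-ψ (x i)) := by
  set D : Fin n → ℝ := fun i => sigmoid (g (x i)) - y i with hD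
  have habspos : ∀ i, 0 < |D i| := by
    intro i
    rcases hy i with h | h
    · have := sigmoid_pos (g (x i))
      simp only [hD, h, sub_zero]
      exact abs_pos.mpr (ne_of_gt this)
    · have := sigmoid_lt_one (g (x i))
      simp only [hD, h]
      exact abs_pos.mpr (by linarith)
  set Z : ℝ := ∑ i, |D i| with hZ
  have hZpos : 0 < Z := by
    apply Finset.sum_pos (fun i _ => habspos i)
    exact Finset.univ_nonempty_iff.mpr ⟨⟨0, hn⟩⟩
  set q : Fin n → ℝ := fun i => |D i| / Z with hq
  obtain ⟨ψ, hψΨ, hψ⟩ := hmargin q (fun i => div_nonneg (abs_nonneg _) hZpos.le)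
    (by simp only [hq]; rw [← Finset.sum_div, ← hZ, div_self hZpos.ne'])
  refine ⟨ψ, hψΨ, ?_⟩
  have hkey : ∀ i, Z * (q i * (2 * y i - 1) * ψ (x i)) = D i * (-ψ (x i)) := by
    intro i
    have hq' : Z * q i = |D i| := by
      simp only [hq]
      field_simp
    have : Z * (q i * (2 * y i - 1) * ψ (x i)) = |D i| * (2 * y i - 1) * ψ (x i) := by
      rw [← hq']; ring
    rw [this]
    rcases hy i with h | h
    · have h0 : 0 < D i := by
        simp only [hD, h, sub_zero]; exact sigmoid_pos _
      rw [abs_of_pos h0, h]; ring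
    · have h0 : D i < 0 := by
        simp only [hD, h]
        linarith [sigmoid_lt_one (g (x i))]
      rw [abs_of_neg h0, h]; ring
  have hsum : Z * ∑ i, q i * (2 * y i - 1) * ψ (x i) = ∑ i, D i * (-ψ (x i)) := by
    rw [Finset.mul_sum]
    exact Finset.sum_congr rfl (fun i _ => hkey i)
  have hmul : γ * B * Z ≤ ∑ i, D i * (-ψ (x i)) := by
    rw [← hsum]
    calc γ * B * Z = Z * (γ * B) := by ring
    _ ≤ Z * ∑ i, q i * (2 * y i - 1) * ψ (x i) := by
        exact mul_le_mul_of_nonneg_left hψ hZpos.le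
  have hinv : (0:ℝ) ≤ 1 / n := by positivity
  calc γ * B * ((1 / n) * Z) = (1 / n) * (γ * B * Z) := by ring
  _ ≤ (1 / n) * ∑ i, D i * (-ψ (x i)) := mul_le_mul_of_nonneg_left hmul hinv
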